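/- arXiv:2405.02768 — 2 statements merged into one kernel-verified Lean document; each statement's English description precedes it below -/
import Mathlib

section
/- In an idempotent variety V, the binary relations →, ←, ⇢, ⇠ on the free algebra F₂ are compatible, i.e., they are subalgebras of F₂ × F₂: if t is any m-ary term of V and sᵢ ⇢ s'ᵢ for all i ≤ m, then t(s₁,...,sₘ) ⇢ t(s'₁,...,s'ₘ), and similarly for →. -/
/-- A signature: a type of operation symbols with arities. -/
structure Sgn where
  ops : Type
  arity : ops → ℕ

/-- Terms over a signature with variables from `V`. -/
inductive Trm (S : Sgn) (V : Type) : Type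
  | var : V → Trm S V
  | op : (f : S.ops) → (Fin (S.arity f) → Trm S V) → Trm S V

/-- An algebra for a signature. -/
structure Alg (S : Sgn) where
  carrier : Type
  interp : (f : S.ops) → (Fin (S.arity f) → carrier) → carrier

/-- Evaluation of a term in an algebra under an assignment. -/
def Trm.eval {S : Sgn} {V : Type} (A : Alg S) (asgn : V → A.carrier) :
    Trm S V → A.carrier
  | .var v => asgn v
  | .op f args => A.interp f (fun i => (args i).eval A asgn)

/-- The identity `t ≈ u` holds throughout the class (variety) `K`. -/
def HoldsIn {S : Sgn} {V : Type} (K : Set (Alg S)) (t u : Trm S V) : Prop :=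
  ∀ A ∈ K, ∀ asgn : V → A.carrier, t.eval A asgn = u.eval A asgn

/-- Substitution of terms for variables. -/
def Trm.subst {S : Sgn} {V W : Type} (σ : V → Trm S W) : Trm S V → Trm S W
  | .var v => σ v
  | .op f args => .op f (fun i => (args i).subst σ)

/-- Every basic operation is idempotent throughout `K`. -/
def IdemK {S : Sgn} (K : Set (Alg S)) : Prop :=
  ∀ A ∈ K, ∀ (f : S.ops) (a : A.carrier), A.interp f (fun _ => a) = a

abbrev T3 (S : Sgn) := Trm S (Fin 3)
abbrev T2 (S : Sgn) := Trm S (Fin 2)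

def x3 {S : Sgn} : T3 S := .var 0
def y3 {S : Sgn} : T3 S := .var 1
def z3 {S : Sgn} : T3 S := .var 2

/-- The generator x̄ of the free algebra on two generators (terms as representatives). -/
def xF {S : Sgn} : T2 S := .var 0
/-- The generator z̄. -/
def zF {S : Sgn} : T2 S := .var 1

/-- `app3 t a b c` is the term `t(a,b,c)`. -/
def app3 {S : Sgn} {V : Type} (t : T3 S) (a b c : Trm S V) : Trm S V :=
  t.subst ![a, b, c]

/-- The binary term `ŝ(x,z)` viewed as a ternary term (not depending on `y`). -/
def bin3 {S : Sgn} (s : T2 S) : T3 S := s.subst ![x3, z3]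

/-- `sub2 s a b` is `s̄(a,b)`, the composition of binary terms. -/
def sub2 {S : Sgn} (s a b : T2 S) : T2 S := s.subst ![a, b]

/-- Dashed arrow `s ⇢ r`. -/
def DashedTo {S : Sgn} (K : Set (Alg S)) (s r : T2 S) : Prop :=
  ∃ t : T3 S, HoldsIn K (bin3 s) (app3 t x3 x3 z3) ∧ HoldsIn K (app3 t x3 z3 z3) (bin3 r)

/-- Solid arrow `s → r`. -/
def SolidTo {S : Sgn} (K : Set (Alg S)) (s r : T2 S) : Prop :=
  ∃ t : T3 S, HoldsIn K (bin3 s) (app3 t x3 x3 z3) ∧ HoldsIn K (app3 t x3 z3 z3) (bin3 r) ∧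
    HoldsIn K (app3 t x3 y3 x3) x3


theorem eval_subst {S : Sgn} {V W : Type} (A : Alg S) (σ : V → Trm S W)
    (asgn : W → A.carrier) (t : Trm S V) :
    (t.subst σ).eval A asgn = t.eval A (fun v => (σ v).eval A asgn) := by
  induction t with
  | var v => rfl
  | op f args ih => simp only [Trm.subst, Trm.eval]; congr 1; funext i; exact ih i

theorem subst_subst {S : Sgn} {U V W : Type} (σ : U → Trm S V) (τ : V → Trm S W)
    (t : Trm S U) : (t.subst σ).subst τ = t.subst (fun v => (σ v).subst τ) := by
  induction t with
  | var v => rfl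
  | op f args ih => simp only [Trm.subst]; congr 1; funext i; exact ih i

theorem holdsIn_subst {S : Sgn} {U V : Type} (K : Set (Alg S))
    (σ σ' : U → Trm S V) (h : ∀ v, HoldsIn K (σ v) (σ' v)) (t : Trm S U) :
    HoldsIn K (t.subst σ) (t.subst σ') := by
  intro A hA asgn
  rw [eval_subst, eval_subst]
  congr 1
  funext v
  exact h v A hA asgn

theorem eval_const {S : Sgn} {V : Type} (K : Set (Alg S)) (hid : IdemK K)
    (A : Alg S) (hA : A ∈ K) (a : A.carrier) (t : Trm S V) :
    t.eval A (fun _ => a) = a := by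
  induction t with
  | var v => rfl
  | op f args ih =>
    simp only [Trm.eval]
    have : (fun i => (args i).eval A (fun _ => a)) = fun _ => a := by
      funext i; exact ih i
    rw [this]; exact hid A hA f a

theorem app3_subst {S : Sgn} {m : ℕ} {V : Type} (t : Trm S (Fin m)) (ts : Fin m → T3 S)
    (a b c : Trm S V) : app3 (t.subst ts) a b c = t.subst (fun i => app3 (ts i) a b c) := by
  unfold app3; rw [subst_subst]

theorem bin3_subst {S : Sgn} {m : ℕ} (t : Trm S (Fin m)) (s : Fin m → T2 S) :
    bin3 (t.subst s) = t.subst (fun i => bin3 (s i)) := by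
  unfold bin3; rw [subst_subst]

theorem holdsIn_subst_const_x3 {S : Sgn} {m : ℕ} (K : Set (Alg S)) (hid : IdemK K)
    (t : Trm S (Fin m)) : HoldsIn K (t.subst (fun _ => (x3 : T3 S))) x3 := by
  intro A hA asgn
  rw [eval_subst]
  exact eval_const K hid A hA (asgn 0) t

/-- the relations `⇢` and `→` are compatible with every term operation
of an idempotent variety, i.e. they are subalgebras of `F₂ × F₂`. -/
theorem arrows_compatible {S : Sgn} (K : Set (Alg S)) (hid : IdemK K)
    (m : ℕ) (t : Trm S (Fin m)) (s s' : Fin m → T2 S) :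
    ((∀ i, DashedTo K (s i) (s' i)) → DashedTo K (t.subst s) (t.subst s')) ∧
    ((∀ i, SolidTo K (s i) (s' i)) → SolidTo K (t.subst s) (t.subst s')) := by
  constructor
  · intro h
    choose ts h1 h2 using h
    refine ⟨t.subst ts, ?_, ?_⟩
    · rw [bin3_subst, app3_subst]
      exact holdsIn_subst K _ _ h1 t
    · rw [bin3_subst, app3_subst]
      exact holdsIn_subst K _ _ h2 t
  · intro h
    choose ts h1 h2 h3 using h
    refine ⟨t.subst ts, ?_, ?_, ?_⟩
    · rw [bin3_subst, app3_subst]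
      exact holdsIn_subst K _ _ h1 t
    · rw [bin3_subst, app3_subst]
      exact holdsIn_subst K _ _ h2 t
    · rw [app3_subst]
      intro A hA asgn
      rw [holdsIn_subst K _ (fun _ => (x3 : T3 S)) h3 t A hA asgn]
      exact holdsIn_subst_const_x3 K hid t A hA asgn
end

section
/- Let V be an idempotent variety and F₂ its free algebra on two generators. If s → r, s' → r', s' ⇢ r'', and s'' → r'', then s̄(s',s'') → r̄(r',r''). -/
theorem eval_bin3 {S : Sgn} (s : T2 S) (A : Alg S) (asgn : Fin 3 → A.carrier) :
    (bin3 s).eval A asgn = s.eval A ![asgn 0, asgn 2] := by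
  rw [bin3, eval_subst]; congr 1; funext v; fin_cases v <;> rfl

theorem eval_app3 {S : Sgn} {V : Type} (t : T3 S) (a b c : Trm S V) (A : Alg S)
    (asgn : V → A.carrier) :
    (app3 t a b c).eval A asgn
      = t.eval A ![a.eval A asgn, b.eval A asgn, c.eval A asgn] := by
  rw [app3, eval_subst]; congr 1; funext v; fin_cases v <;> rfl

theorem eval_sub2 {S : Sgn} (s a b : T2 S) (A : Alg S) (asgn : Fin 2 → A.carrier) :
    (sub2 s a b).eval A asgn = s.eval A ![a.eval A asgn, b.eval A asgn] := by
  rw [sub2, eval_subst]; congr 1; funext v; fin_cases v <;> rfl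

theorem eval_subst3 {S : Sgn} (t p q u : T3 S) (A : Alg S) (β : Fin 3 → A.carrier) :
    (t.subst ![p, q, u]).eval A β
      = t.eval A ![p.eval A β, q.eval A β, u.eval A β] := by
  rw [eval_subst]; congr 1; funext v; fin_cases v <;> rfl

/-- if `s → r`, `s' → r'`, `s' ⇢ r''` and `s'' → r''`,
then `s̄(s',s'') → r̄(r',r'')`. -/
theorem solid_subst {S : Sgn} (K : Set (Alg S)) (hid : IdemK K)
    (s r s' r' s'' r'' : T2 S)
    (h1 : SolidTo K s r) (h2 : SolidTo K s' r')
    (h3 : DashedTo K s' r'') (h4 : SolidTo K s'' r'') :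
    SolidTo K (sub2 s s' s'') (sub2 r r' r'') := by
  obtain ⟨t, ht1, ht2, ht3⟩ := h1
  obtain ⟨t', hta, htb, htc⟩ := h2
  obtain ⟨t3, hda, hdb⟩ := h3
  obtain ⟨t'', hua, hub, huc⟩ := h4
  refine ⟨t.subst ![t', t3, t''], ?_, ?_, ?_⟩ <;> intro A hA asgn
  · -- T(x,x,z) ≈ s(s'(x,z), s''(x,z))
    have H1 : ∀ p q : A.carrier, s.eval A ![p, q] = t.eval A ![p, p, q] := by
      intro p q
      have h := ht1 A hA ![p, p, q]
      rw [eval_bin3, eval_app3] at h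
      simpa [Trm.eval, x3, z3] using h
    have Ha := hta A hA ![asgn 0, asgn 0, asgn 2]
    have Hd := hda A hA ![asgn 0, asgn 0, asgn 2]
    have Hu := hua A hA ![asgn 0, asgn 0, asgn 2]
    rw [eval_bin3, eval_app3] at Ha Hd Hu
    rw [eval_bin3, eval_sub2, eval_app3, eval_subst3]
    simp only [Trm.eval, x3, z3, Matrix.cons_val_zero, Matrix.cons_val_one,
      Matrix.head_cons, Matrix.cons_val_two, Matrix.tail_cons] at Ha Hd Hu ⊢
    rw [← Ha, ← Hd, ← Hu]
    exact H1 _ _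
  · -- T(x,z,z) ≈ r(r'(x,z), r''(x,z))
    have H1 : ∀ p q : A.carrier, t.eval A ![p, q, q] = r.eval A ![p, q] := by
      intro p q
      have h := ht2 A hA ![p, q, q]
      rw [eval_bin3, eval_app3] at h
      simpa [Trm.eval, x3, z3] using h
    have Hb := htb A hA ![asgn 0, asgn 2, asgn 2]
    have Hd := hdb A hA ![asgn 0, asgn 2, asgn 2]
    have Hu := hub A hA ![asgn 0, asgn 2, asgn 2]
    rw [eval_bin3, eval_app3] at Hb Hd Hu
    rw [eval_bin3, eval_sub2, eval_app3, eval_subst3]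
    simp only [Trm.eval, x3, z3, Matrix.cons_val_zero, Matrix.cons_val_one,
      Matrix.head_cons, Matrix.cons_val_two, Matrix.tail_cons] at Hb Hd Hu ⊢
    rw [Hb, Hd, Hu]
    exact H1 _ _
  · -- T(x,y,x) ≈ x
    have H1 : ∀ p q : A.carrier, t.eval A ![p, q, p] = p := by
      intro p q
      have h := ht3 A hA ![p, q, p]
      rw [eval_app3] at h
      simpa [Trm.eval, x3, y3, z3] using h
    have Hc := htc A hA ![asgn 0, asgn 1, asgn 0]
    have Hu := huc A hA ![asgn 0, asgn 1, asgn 0]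
    rw [eval_app3] at Hc Hu
    rw [eval_app3, eval_subst3]
    simp only [Trm.eval, x3, y3, z3, Matrix.cons_val_zero, Matrix.cons_val_one,
      Matrix.head_cons, Matrix.cons_val_two, Matrix.tail_cons] at Hc Hu ⊢
    rw [Hc, Hu]
    exact H1 _ _
end
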